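/- For every r ≥ 1 and every n, the r-major index rmaj is equidistributed with inv over S_n; that is, Σ_{π∈S_n} q^{rmaj(π)} = Σ_{π∈S_n} q^{inv(π)}. -/

import Mathlib

/-
Insert the new largest letter `n` into `σ ∈ S_n` at one of the slots `0, …, n`. Every permutation
of `S_{n+1}` arises exactly once this way, and `inv` grows by the number `n - k` of letters right of
slot `k`. For `rmaj` the growth is the number of `r`-descents and of letters `> n - r` right of the
slot, plus `k + 1` if `n` forms a new `r`-descent with the next letter, minus `k` if the slot breaks
up an `r`-descent. Call a slot low if it breaks an `r`-descent or is followed by a letter `> n - r`: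
a low slot then adds `1 +` the number of low slots to its right, any other slot `k < n` adds
`n -` the number of other slots to its right, and slot `n` adds `0`. So for both statistics the
increments run through `0, …, n` exactly once, and both generating functions equal
`∏_{i < n} (1 + q + ⋯ + q^i)`.
-/

open Finset Equiv

namespace PaperStat

noncomputable section

attribute [local instance] Classical.propDecidable

/-- number of inversions of a permutation (pairs i<j with π i > π j) -/
def inv {n : ℕ} (π : Perm (Fin n)) : ℕ :=
  (univ.filter (fun p : Fin n × Fin n => p.1 < p.2 ∧ π p.2 < π p.1)).card

/-- pairs (i, i+1) forming an r-descent -/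
def desSet {n : ℕ} (r : ℕ) (π : Perm (Fin n)) : Finset (Fin n × Fin n) :=
  univ.filter (fun p : Fin n × Fin n =>
    (p.2 : ℕ) = (p.1 : ℕ) + 1 ∧ (π p.2 : ℕ) + r ≤ (π p.1 : ℕ))

/-- r-descent number -/
def rdes {n : ℕ} (r : ℕ) (π : Perm (Fin n)) : ℕ := (desSet r π).card

/-- r-major index: sum of (1-based) r-descent positions plus |rInv| -/
def rmaj {n : ℕ} (r : ℕ) (π : Perm (Fin n)) : ℕ :=
  (∑ p ∈ desSet r π, ((p.1 : ℕ) + 1)) +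
  (univ.filter (fun p : Fin n × Fin n =>
      p.1 < p.2 ∧ (π p.2 : ℕ) < (π p.1 : ℕ) ∧ (π p.1 : ℕ) < (π p.2 : ℕ) + r)).card

/-- descent number -/
def des {n : ℕ} (π : Perm (Fin n)) : ℕ := rdes 1 π

/-- major index -/
def maj {n : ℕ} (π : Perm (Fin n)) : ℕ := ∑ p ∈ desSet 1 π, ((p.1 : ℕ) + 1)

/-- i is a g-gap L-level excedance place (1-based: π_i ≥ i+g and π_i ≥ L) -/
def excp {n : ℕ} (g L : ℕ) (π : Perm (Fin n)) (i : Fin n) : Prop :=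
  (i : ℕ) + g ≤ (π i : ℕ) ∧ L ≤ (π i : ℕ) + 1

/-- g-gap ℓ-level excedance number: positions i ≥ ℓ (1-based) with π_i ≥ i+g -/
def gexc {n : ℕ} (g l : ℕ) (π : Perm (Fin n)) : ℕ :=
  (univ.filter (fun i : Fin n => l ≤ (i : ℕ) + 1 ∧ (i : ℕ) + g ≤ (π i : ℕ))).card

/-- inversions of the subword of π on positions satisfying P -/
def invOn {n : ℕ} (π : Perm (Fin n)) (P : Fin n → Prop) : ℕ :=
  (univ.filter (fun p : Fin n × Fin n =>
    P p.1 ∧ P p.2 ∧ p.1 < p.2 ∧ π p.2 < π p.1)).card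

/-- g-gap L-level Denert statistic: Σ_{i ∈ gExcp}(i+g-1) (1-based) + inversions
of the excedance subword + inversions of the non-excedance subword -/
def gden {n : ℕ} (g L : ℕ) (π : Perm (Fin n)) : ℕ :=
  (∑ i ∈ univ.filter (fun i : Fin n => excp g L π i), ((i : ℕ) + g)) +
  invOn π (fun i => excp g L π i) +
  invOn π (fun i => ¬ excp g L π i)

end

section Words

variable {n k m : ℕ} {w : ℕ → ℕ}

/-- The `j`-th element of `ℕ \ {k}`, the analogue of `Fin.succAbove`. -/
def natSuccAbove (k j : ℕ) : ℕ := if j < k then j else j + 1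

lemma natSuccAbove_lt_natSuccAbove_iff {a b : ℕ} : natSuccAbove k a < natSuccAbove k b ↔ a < b := by
  unfold natSuccAbove; split_ifs <;> omega

lemma lt_natSuccAbove_iff {j : ℕ} : k < natSuccAbove k j ↔ k ≤ j := by
  unfold natSuccAbove; split_ifs <;> omega

lemma natSuccAbove_lt_iff {j : ℕ} : natSuccAbove k j < k ↔ j < k := by
  unfold natSuccAbove; split_ifs <;> omega

lemma val_succAbove (k : Fin (n + 1)) (j : Fin n) : (k.succAbove j : ℕ) = natSuccAbove k j := by
  unfold natSuccAbove
  split_ifs with h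
  · rw [Fin.succAbove_of_castSucc_lt _ _ (Fin.lt_def.mpr h), Fin.val_castSucc]
  · rw [Fin.succAbove_of_le_castSucc _ _ (Fin.le_def.mpr (by simpa using h)), Fin.val_succ]

lemma sum_range_succ_eq_add_sum_natSuccAbove {M : Type*} [AddCommMonoid M] (hk : k ≤ n)
    (f : ℕ → M) : ∑ i ∈ range (n + 1), f i = f k + ∑ j ∈ range n, f (natSuccAbove k j) := by
  rw [← Fin.sum_univ_eq_sum_range, ← Fin.sum_univ_eq_sum_range (fun j => f (natSuccAbove k j)),
    Fin.sum_univ_succAbove _ ⟨k, Nat.lt_succ_of_le hk⟩]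
  simp only [val_succAbove]

def insertAt (k m : ℕ) (w : ℕ → ℕ) (i : ℕ) : ℕ :=
  if i < k then w i else if i = k then m else w (i - 1)

@[simp] lemma insertAt_self : insertAt k m w k = m := by simp [insertAt]

@[simp] lemma insertAt_natSuccAbove (j : ℕ) : insertAt k m w (natSuccAbove k j) = w j := by
  unfold insertAt natSuccAbove; split_ifs <;> first | rfl | omega

end Words

section PairCount

variable {n k m : ℕ} {w : ℕ → ℕ}

def pairCount (n : ℕ) (w : ℕ → ℕ) (R : ℕ → ℕ → Prop) [DecidableRel R] : ℕ :=
  ∑ i ∈ range n, ∑ j ∈ range n, if i < j ∧ R (w i) (w j) then 1 else 0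

lemma pairCount_insertAt (R : ℕ → ℕ → Prop) [DecidableRel R] (hk : k ≤ n) :
    pairCount (n + 1) (insertAt k m w) R =
      pairCount n w R + #{j ∈ Ico k n | R m (w j)} + #{j ∈ range k | R (w j) m} := by
  have hfrom_new : ∑ j ∈ range (n + 1), (if k < j ∧ R m (insertAt k m w j) then 1 else 0) =
      #{j ∈ Ico k n | R m (w j)} := by
    rw [sum_range_succ_eq_add_sum_natSuccAbove hk, ← card_filter]
    simp only [lt_irrefl, false_and, if_false, zero_add, insertAt_natSuccAbove,
      lt_natSuccAbove_iff]
    congr 1; ext j; simp only [mem_filter, mem_range, mem_Ico]; tauto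
  have hfrom_old (i : ℕ) : ∑ j ∈ range (n + 1),
      (if natSuccAbove k i < j ∧ R (w i) (insertAt k m w j) then 1 else 0) =
      (if i < k ∧ R (w i) m then 1 else 0) +
        ∑ j ∈ range n, if i < j ∧ R (w i) (w j) then 1 else 0 := by
    rw [sum_range_succ_eq_add_sum_natSuccAbove hk]
    simp only [insertAt_natSuccAbove, natSuccAbove_lt_natSuccAbove_iff, insertAt_self,
      natSuccAbove_lt_iff]
  unfold pairCount
  rw [sum_range_succ_eq_add_sum_natSuccAbove hk, insertAt_self, hfrom_new]
  simp only [insertAt_natSuccAbove, hfrom_old, sum_add_distrib]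
  have hinto_new : ∑ i ∈ range n, (if i < k ∧ R (w i) m then 1 else 0) =
      #{j ∈ range k | R (w j) m} := by
    rw [← card_filter]
    congr 1; ext j; simp only [mem_filter, mem_range]
    exact ⟨fun ⟨_, h, hR⟩ => ⟨h, hR⟩, fun ⟨h, hR⟩ => ⟨by omega, h, hR⟩⟩
  rw [hinto_new]
  omega

end PairCount

section Descents

variable {n k m r : ℕ} {w : ℕ → ℕ}

def IsRDescent (r n : ℕ) (w : ℕ → ℕ) (i : ℕ) : Prop := i + 1 < n ∧ w (i + 1) + r ≤ w i

instance (r n : ℕ) (w : ℕ → ℕ) : DecidablePred (IsRDescent r n w) :=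
  fun i => inferInstanceAs (Decidable (i + 1 < n ∧ w (i + 1) + r ≤ w i))

/-- Positions are `0`-based, so the `r`-descent at `i` contributes `i + 1`. -/
def rdesSum (r n : ℕ) (w : ℕ → ℕ) : ℕ := ∑ i ∈ range n, if IsRDescent r n w i then i + 1 else 0

lemma isRDescent_insertAt_self :
    IsRDescent r (n + 1) (insertAt k m w) k ↔ k < n ∧ w k + r ≤ m := by
  unfold IsRDescent insertAt; split_ifs <;> simp_all

lemma isRDescent_insertAt_natSuccAbove (hw : ∀ i < n, w i < m) (hk : k ≤ n) (j : ℕ) :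
    IsRDescent r (n + 1) (insertAt k m w) (natSuccAbove k j) ↔ IsRDescent r n w j ∧ j + 1 ≠ k := by
  have hwj : j + 1 = k → w j < m := fun h => hw j (by omega)
  unfold IsRDescent insertAt natSuccAbove; split_ifs <;> simp_all <;> omega

lemma rdesSum_insertAt (hw : ∀ i < n, w i < m) (hk : k ≤ n) :
    rdesSum r (n + 1) (insertAt k m w) + (if 0 < k ∧ IsRDescent r n w (k - 1) then k else 0) =
      rdesSum r n w + #{j ∈ Ico k n | IsRDescent r n w j} +
        if k < n ∧ w k + r ≤ m then k + 1 else 0 := by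
  unfold rdesSum
  rw [sum_range_succ_eq_add_sum_natSuccAbove hk]
  simp only [isRDescent_insertAt_self, isRDescent_insertAt_natSuccAbove hw hk]
  have hlost : ∑ j ∈ range n, (if IsRDescent r n w j ∧ j + 1 = k then j + 1 else 0) =
      if 0 < k ∧ IsRDescent r n w (k - 1) then k else 0 := by
    split_ifs with h
    · have hkn : k - 1 < n := by have := h.2.1; omega
      rw [sum_eq_single_of_mem (k - 1) (mem_range.mpr hkn), if_pos ⟨h.2, by omega⟩]
      · omega
      · exact fun j _ hj => if_neg fun ⟨_, hj'⟩ => hj (by omega)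
    · refine sum_eq_zero fun j _ => if_neg ?_
      rintro ⟨hD, rfl⟩
      exact h ⟨by omega, hD⟩
  have hshift : #{j ∈ Ico k n | IsRDescent r n w j} =
      ∑ j ∈ range n, if IsRDescent r n w j ∧ k ≤ j then 1 else 0 := by
    rw [← card_filter]
    congr 1; ext j; simp only [mem_filter, mem_range, mem_Ico]; tauto
  have hterm (j : ℕ) : ((if IsRDescent r n w j ∧ j + 1 ≠ k then natSuccAbove k j + 1 else 0) +
      if IsRDescent r n w j ∧ j + 1 = k then j + 1 else 0) =
      (if IsRDescent r n w j then j + 1 else 0) + if IsRDescent r n w j ∧ k ≤ j then 1 else 0 := by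
    unfold natSuccAbove
    by_cases hD : IsRDescent r n w j <;> simp only [hD, true_and, false_and, if_false]
    split_ifs <;> omega
  rw [← hlost, hshift, add_assoc, ← sum_add_distrib, sum_congr rfl fun j _ => hterm j,
    sum_add_distrib]
  omega

end Descents

section Slots

variable {n k : ℕ} {low : ℕ → Prop} [DecidablePred low]

lemma card_filter_lt_card_filter {α : Type*} {s t : Finset α} (p : α → Prop) [DecidablePred p]
    (hst : s ⊆ t) {a : α} (hat : a ∈ t) (has : a ∉ s) (hpa : p a) :
    #{x ∈ s | p x} < #{x ∈ t | p x} :=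
  card_lt_card ⟨filter_subset_filter _ hst,
    fun h => has (mem_filter.mp (h (mem_filter.mpr ⟨hat, hpa⟩))).1⟩

lemma card_filter_Ioo_add_card_filter_Ioo_not (k : ℕ) :
    #{s ∈ Ioo k n | low s} + #{s ∈ Ioo k n | ¬ low s} = n - k - 1 := by
  rw [card_filter_add_card_filter_not, Nat.card_Ioo]

def slotRank (n : ℕ) (low : ℕ → Prop) [DecidablePred low] (k : ℕ) : ℕ :=
  if k = n then 0
  else if low k then #{s ∈ Ioo k n | low s} + 1
  else n - #{s ∈ Ioo k n | ¬ low s}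

lemma slotRank_le (hk : k ≤ n) : slotRank n low k ≤ n := by
  have := card_filter_Ioo_add_card_filter_Ioo_not (n := n) (low := low) k
  unfold slotRank
  split_ifs <;> omega

lemma slotRank_ne_of_lt {a b : ℕ} (hab : a < b) (hb : b ≤ n) :
    slotRank n low a ≠ slotRank n low b := by
  have hpart := card_filter_Ioo_add_card_filter_Ioo_not (n := n) (low := low) a
  unfold slotRank
  by_cases hbn : b = n
  · rw [if_neg (by omega), if_pos hbn]
    split_ifs <;> omega
  have hb_mem : b ∈ Ioo a n := mem_Ioo.mpr ⟨hab, by omega⟩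
  have hsub : Ioo b n ⊆ Ioo a n := Ioo_subset_Ioo_left hab.le
  rw [if_neg (by omega), if_neg hbn]
  by_cases hlb : low b
  · have := card_filter_lt_card_filter low hsub hb_mem (by simp) hlb
    by_cases hla : low a <;> simp only [hla, hlb, if_true, if_false] <;> omega
  · have := card_filter_lt_card_filter (¬ low ·) hsub hb_mem (by simp) hlb
    by_cases hla : low a <;> simp only [hla, hlb, if_true, if_false] <;> omega

noncomputable def slotRankPerm (n : ℕ) (low : ℕ → Prop) [DecidablePred low] : Perm (Fin (n + 1)) :=
  Equiv.ofBijective (fun k => ⟨slotRank n low k, Nat.lt_succ_of_le (slotRank_le k.is_le)⟩) <|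
    Finite.injective_iff_bijective.mp fun a b h => by
      by_contra hne
      rcases lt_or_gt_of_ne (Fin.val_ne_of_ne hne) with hab | hab
      · exact slotRank_ne_of_lt hab b.is_le (congrArg Fin.val h)
      · exact slotRank_ne_of_lt hab a.is_le (congrArg Fin.val h).symm

@[simp] lemma val_slotRankPerm (n : ℕ) (low : ℕ → Prop) [DecidablePred low] (k : Fin (n + 1)) :
    (slotRankPerm n low k : ℕ) = slotRank n low k :=
  rfl

end Slots

section LowSlots

variable {n k : ℕ} {d b : ℕ → Prop} [DecidablePred d] [DecidablePred b]

def lowSlot (d b : ℕ → Prop) (s : ℕ) : Prop := b s ∨ (0 < s ∧ d (s - 1))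

instance : DecidablePred (lowSlot d b) :=
  fun s => inferInstanceAs (Decidable (b s ∨ (0 < s ∧ d (s - 1))))

lemma card_filter_Ico_add_card_filter_Ico (hd : ∀ j, d j → j + 1 < n) (hb : ∀ j, b j → j < n)
    (hdb : ∀ j, d j → ¬ b (j + 1)) (k : ℕ) :
    #{j ∈ Ico k n | d j} + #{j ∈ Ico k n | b j} =
      #{s ∈ Ioo k n | lowSlot d b s} + if b k then 1 else 0 := by
  have hlow : {s ∈ Ioo k n | lowSlot d b s} =
      {j ∈ Ico k n | d j}.map (addRightEmbedding 1) ∪ {s ∈ Ioo k n | b s} := by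
    ext s
    simp only [mem_filter, mem_Ioo, mem_union, mem_map, mem_Ico, addRightEmbedding_apply]
    unfold lowSlot
    constructor
    · rintro ⟨hs, hbs | ⟨hs0, hds⟩⟩
      · exact Or.inr ⟨hs, hbs⟩
      · exact Or.inl ⟨s - 1, ⟨⟨by omega, by omega⟩, hds⟩, by omega⟩
    · rintro (⟨j, ⟨hj, hdj⟩, rfl⟩ | ⟨hs, hbs⟩)
      · exact ⟨⟨by omega, hd j hdj⟩, Or.inr ⟨by omega, by simpa using hdj⟩⟩
      · exact ⟨hs, Or.inl hbs⟩
  have hdisj : Disjoint ({j ∈ Ico k n | d j}.map (addRightEmbedding 1)) {s ∈ Ioo k n | b s} := by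
    simp only [disjoint_left, mem_map, mem_filter, addRightEmbedding_apply]
    rintro _ ⟨j, ⟨-, hdj⟩, rfl⟩ ⟨-, hbj⟩
    exact hdb j hdj hbj
  have hbk : #{j ∈ Ico k n | b j} = #{s ∈ Ioo k n | b s} + if b k then 1 else 0 := by
    by_cases hk : k < n
    · rw [Ico_eq_cons_Ioo hk, filter_cons]
      split_ifs <;> simp
    · rw [if_neg fun h => hk (hb k h), Ico_eq_empty_of_le (by omega), Ioo_eq_empty (by omega)]
      simp
  rw [hlow, card_union_of_disjoint hdisj, card_map, hbk, add_assoc]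

lemma add_ite_eq_slotRank_add_ite (hd : ∀ j, d j → j + 1 < n) (hb : ∀ j, b j → j < n)
    (hdb : ∀ j, d j → ¬ b (j + 1)) (hk : k ≤ n) :
    #{j ∈ Ico k n | d j} + #{j ∈ Ico k n | b j} + (if k < n ∧ ¬ b k then k + 1 else 0) =
      slotRank n (lowSlot d b) k + if 0 < k ∧ d (k - 1) then k else 0 := by
  rw [card_filter_Ico_add_card_filter_Ico hd hb hdb]
  have hpart := card_filter_Ioo_add_card_filter_Ioo_not (n := n) (low := lowSlot d b) k
  unfold slotRank
  by_cases hkn : k = n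
  · subst hkn
    have hbk : ¬ b k := fun h => (hb k h).false
    have hdk : ¬ (0 < k ∧ d (k - 1)) := fun h => by have := hd _ h.2; omega
    simp [hbk, hdk]
  have hkn' : k < n := by omega
  by_cases hbk : b k
  · have hdk : ¬ (0 < k ∧ d (k - 1)) := fun h => hdb _ h.2 (by rwa [Nat.sub_add_cancel h.1])
    have hlk : lowSlot d b k := Or.inl hbk
    simp only [hbk, hdk, hkn, hlk, not_true_eq_false, and_false, if_true, if_false]
  by_cases hdk : 0 < k ∧ d (k - 1)
  · have hlk : lowSlot d b k := Or.inr hdk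
    simp only [hbk, hdk, hkn, hkn', hlk, not_false_eq_true, and_self, if_true, if_false]
    omega
  · have hlk : ¬ lowSlot d b k := fun h => h.elim hbk hdk
    simp only [hbk, hdk, hkn, hkn', hlk, not_false_eq_true, and_self, if_true, if_false]
    omega

end LowSlots

section Permutations

variable {n : ℕ}

def word (π : Perm (Fin n)) (i : ℕ) : ℕ := if h : i < n then π ⟨i, h⟩ else 0

lemma word_apply (π : Perm (Fin n)) (i : Fin n) : word π i = π i := by
  simp [word]

lemma word_lt (π : Perm (Fin n)) {i : ℕ} (hi : i < n) : word π i < n := by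
  simp [word, hi]

lemma sum_prod_fin_eq_sum_range {M : Type*} [AddCommMonoid M] (F : ℕ → ℕ → M) :
    ∑ p : Fin n × Fin n, F p.1 p.2 = ∑ i ∈ range n, ∑ j ∈ range n, F i j := by
  rw [Fintype.sum_prod_type, ← Fin.sum_univ_eq_sum_range]
  simp only [Fin.sum_univ_eq_sum_range (F _)]

lemma inv_eq_pairCount (π : Perm (Fin n)) : inv π = pairCount n (word π) (fun a b => b < a) := by
  rw [inv, card_filter, pairCount, ← sum_prod_fin_eq_sum_range]
  refine sum_congr rfl fun p _ => ?_
  congr 1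
  simp only [word_apply, Fin.lt_def]

lemma rmaj_eq_rdesSum_add_pairCount (r : ℕ) (π : Perm (Fin n)) :
    rmaj r π = rdesSum r n (word π) + pairCount n (word π) (fun a b => b < a ∧ a < b + r) := by
  have hdes : ∑ p ∈ desSet r π, ((p.1 : ℕ) + 1) = rdesSum r n (word π) := by
    have hrow (i : ℕ) : ∑ j ∈ range n, (if j = i + 1 ∧ word π j + r ≤ word π i then i + 1 else 0) =
        if IsRDescent r n (word π) i then i + 1 else 0 := by
      by_cases h : IsRDescent r n (word π) i
      · rw [if_pos h, sum_eq_single_of_mem (i + 1) (mem_range.mpr h.1), if_pos ⟨rfl, h.2⟩]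
        exact fun j _ hj => if_neg fun hc => hj hc.1
      · rw [if_neg h]
        refine sum_eq_zero fun j hj => if_neg ?_
        rintro ⟨rfl, hw⟩
        exact h ⟨mem_range.mp hj, hw⟩
    rw [desSet, sum_filter, rdesSum, ← sum_congr rfl fun i _ => hrow i, ← sum_prod_fin_eq_sum_range]
    refine sum_congr rfl fun p _ => ?_
    congr 1
    simp only [word_apply]
  rw [rmaj, hdes, card_filter, pairCount, ← sum_prod_fin_eq_sum_range]
  refine congrArg _ (sum_congr rfl fun p _ => ?_)
  congr 1
  simp only [word_apply, Fin.lt_def]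

/-- The one-line notation of `σ` with the new largest letter `n` inserted at slot `k`. -/
def insertMax (σ : Perm (Fin n)) (k : Fin (n + 1)) : Perm (Fin (n + 1)) :=
  ((finSuccEquiv' k).trans (optionCongr σ)).trans (finSuccEquiv' (Fin.last n)).symm

@[simp] lemma insertMax_apply_self (σ : Perm (Fin n)) (k : Fin (n + 1)) :
    insertMax σ k k = Fin.last n := by
  simp [insertMax]

@[simp] lemma insertMax_apply_succAbove (σ : Perm (Fin n)) (k : Fin (n + 1)) (j : Fin n) :
    insertMax σ k (k.succAbove j) = (σ j).castSucc := by
  simp [insertMax, Fin.succAbove_last]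

lemma word_insertMax (σ : Perm (Fin n)) (k : Fin (n + 1)) :
    word (insertMax σ k) = insertAt k n (word σ) := by
  funext i
  by_cases hi : i < n + 1
  · obtain h | ⟨j, h⟩ := Fin.eq_self_or_eq_succAbove k ⟨i, hi⟩
    · have hik : i = k := congrArg Fin.val h
      rw [word, dif_pos hi, h, insertMax_apply_self, Fin.val_last, hik, insertAt_self]
    · have hij : i = natSuccAbove k j := by rw [← val_succAbove, ← h]
      rw [word, dif_pos hi, h, insertMax_apply_succAbove, Fin.val_castSucc, hij,
        insertAt_natSuccAbove, word_apply]
  · rw [word, dif_neg hi, insertAt, if_neg (by omega), if_neg (by omega), word, dif_neg (by omega)]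

lemma insertMax_bijective :
    Function.Bijective fun p : Perm (Fin n) × Fin (n + 1) => insertMax p.1 p.2 := by
  refine (Fintype.bijective_iff_injective_and_card _).mpr ⟨?_, ?_⟩
  · rintro ⟨σ, k⟩ ⟨σ', k'⟩ h
    simp only at h
    obtain rfl : k = k' := by
      by_contra hne
      obtain ⟨j, hj⟩ := Fin.exists_succAbove_eq hne
      have := insertMax_apply_self σ k
      rw [h, ← hj, insertMax_apply_succAbove] at this
      exact (Fin.castSucc_lt_last (σ' j)).ne this
    obtain rfl : σ = σ' := Equiv.ext fun j => Fin.castSucc_injective _ <| by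
      rw [← insertMax_apply_succAbove, h, insertMax_apply_succAbove]
    rfl
  · simp [Fintype.card_perm, Nat.factorial_succ, mul_comm]

end Permutations

theorem sum_pow_eq_prod_of_insertMax {R : Type*} [CommSemiring R] (q : R)
    (stat : (n : ℕ) → Perm (Fin n) → ℕ) (h0 : ∀ π, stat 0 π = 0)
    (hins : ∀ n (σ : Perm (Fin n)), ∃ e : Perm (Fin (n + 1)),
      ∀ k, stat (n + 1) (insertMax σ k) = stat n σ + e k) (n : ℕ) :
    ∑ π : Perm (Fin n), q ^ stat n π = ∏ i ∈ range n, ∑ j ∈ range (i + 1), q ^ j := by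
  choose e he using hins
  induction n with
  | zero => simp [h0]
  | succ n ih =>
    calc ∑ π : Perm (Fin (n + 1)), q ^ stat (n + 1) π
        = ∑ σ : Perm (Fin n), ∑ k : Fin (n + 1), q ^ stat (n + 1) (insertMax σ k) := by
          rw [← Fintype.sum_prod_type']
          exact (Fintype.sum_bijective _ insertMax_bijective _ _ fun _ => rfl).symm
      _ = ∑ σ : Perm (Fin n), q ^ stat n σ * ∑ j ∈ range (n + 1), q ^ j := by
          refine sum_congr rfl fun σ _ => ?_
          simp only [he, pow_add, ← mul_sum]
          rw [Equiv.sum_comp (e n σ) fun k => q ^ (k : ℕ), Fin.sum_univ_eq_sum_range]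
      _ = ∏ i ∈ range (n + 1), ∑ j ∈ range (i + 1), q ^ j := by
          rw [← sum_mul, ih, prod_range_succ]

section Increments

variable {n : ℕ}

lemma inv_insertMax (σ : Perm (Fin n)) (k : Fin (n + 1)) :
    inv (insertMax σ k) = inv σ + Fin.revPerm k := by
  rw [inv_eq_pairCount, inv_eq_pairCount, word_insertMax, pairCount_insertAt _ k.is_le,
    filter_true_of_mem, filter_false_of_mem, card_empty, Nat.card_Ico, Fin.revPerm_apply,
    Fin.val_rev]
  · omega
  · exact fun j hj => (word_lt σ (by have := mem_range.mp hj; omega)).not_gt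
  · exact fun j hj => word_lt σ (mem_Ico.mp hj).2

lemma rmaj_insertMax (r : ℕ) (σ : Perm (Fin n)) (k : Fin (n + 1)) :
    rmaj r (insertMax σ k) = rmaj r σ +
      slotRankPerm n (lowSlot (IsRDescent r n (word σ)) fun j => j < n ∧ n < word σ j + r) k := by
  have hd (j : ℕ) (h : IsRDescent r n (word σ) j) : j + 1 < n := h.1
  have hb (j : ℕ) (h : j < n ∧ n < word σ j + r) : j < n := h.1
  have hdb (j : ℕ) (h : IsRDescent r n (word σ) j) : ¬ (j + 1 < n ∧ n < word σ (j + 1) + r) :=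
    fun _ => by have := word_lt σ (show j < n by omega); have := h.2; omega
  have hdes := rdesSum_insertAt (r := r) (fun i => word_lt σ (i := i)) k.is_le
  have hslot := add_ite_eq_slotRank_add_ite hd hb hdb k.is_le
  have hnew_descent : (if (k : ℕ) < n ∧ word σ k + r ≤ n then (k : ℕ) + 1 else 0) =
      if (k : ℕ) < n ∧ ¬ ((k : ℕ) < n ∧ n < word σ k + r) then (k : ℕ) + 1 else 0 :=
    if_congr (by omega) rfl rfl
  rw [rmaj_eq_rdesSum_add_pairCount, rmaj_eq_rdesSum_add_pairCount, word_insertMax,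
    pairCount_insertAt _ k.is_le, filter_false_of_mem (s := range k), card_empty,
    filter_congr (s := Ico (k : ℕ) n) (q := fun j => j < n ∧ n < word σ j + r), val_slotRankPerm]
  · omega
  · intro j hj
    have hj := mem_Ico.mp hj
    have := word_lt σ hj.2
    omega
  · intro j hj
    have := word_lt σ (show j < n by have := mem_range.mp hj; omega)
    omega

end Increments

theorem rmaj_equidistributed_inv_general (r : ℕ) (n : ℕ)
    (R : Type*) [CommSemiring R] (q : R) :
    (∑ π : Perm (Fin n), q ^ rmaj r π) = (∑ π : Perm (Fin n), q ^ inv π) :=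
  (sum_pow_eq_prod_of_insertMax q (fun _ π => rmaj r π) (fun π => by simp [rmaj, desSet])
      (fun _ σ => ⟨_, rmaj_insertMax r σ⟩) n).trans
    (sum_pow_eq_prod_of_insertMax q (fun _ π => inv π) (fun π => by simp [inv])
      (fun _ σ => ⟨Fin.revPerm, inv_insertMax σ⟩) n).symm

/-- rmaj is Mahonian, i.e. equidistributed with inv. -/
theorem rmaj_equidistributed_inv (r : ℕ) (hr : 1 ≤ r) (n : ℕ)
    (R : Type*) [CommSemiring R] (q : R) :
    (∑ π : Perm (Fin n), q ^ rmaj r π) = (∑ π : Perm (Fin n), q ^ inv π) :=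
  rmaj_equidistributed_inv_general r n R q

end PaperStat
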